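/- Let f : [0,1] → ℝ be convex and non-decreasing. Then f is continuous on [0,1) and upper semicontinuous at every point; moreover if f is the convex envelope of a non-decreasing function Φ that is left-continuous at 1, then f(1) = lim_{m→1⁻} f(m). -/

import Mathlib

/-!
On the open interval a convex function is continuous, and at the endpoints it lies below its
chord, which gives upper semicontinuity on all of `[0,1]`; at `0` monotonicity supplies the
matching lower bound. At `1`, lower semicontinuity of the envelope `f = Φ̂` comes from hinge
functions: for `t < 1` the convex minorant `Φ 0 + c (x - t)⁺` of `Φ` equals `Φ t` at `1`, and
`Φ t` is as close to `Φ 1 ≥ f 1` as we like by left continuity of `Φ`.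
-/

/-- The convex envelope on `[0,1]`: the pointwise supremum of all convex functions on
`[0,1]` dominated by `f` there. -/
noncomputable def convEnvOn (f : ℝ → ℝ) (m : ℝ) : ℝ :=
  sSup {y : ℝ | ∃ h : ℝ → ℝ, ConvexOn ℝ (Set.Icc (0:ℝ) 1) h ∧
    (∀ x ∈ Set.Icc (0:ℝ) 1, h x ≤ f x) ∧ y = h m}

open Set Filter Topology

theorem ContinuousWithinAt.upperSemicontinuousWithinAt_of_le {α : Type*} [TopologicalSpace α]
    {f g : α → ℝ} {s : Set α} {x : α} (hg : ContinuousWithinAt g s x)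
    (hfg : ∀ y ∈ s, f y ≤ g y) (hx : g x ≤ f x) : UpperSemicontinuousWithinAt f s x := by
  intro y hy
  filter_upwards [hg.upperSemicontinuousWithinAt y (hx.trans_lt hy), self_mem_nhdsWithin]
    with z hgz hz using (hfg z hz).trans_lt hgz

theorem ConvexOn.mul_le_chord {f : ℝ → ℝ} {a b t : ℝ} (hf : ConvexOn ℝ (Icc a b) f)
    (ht : t ∈ Icc a b) : (b - a) * f t ≤ (b - t) * f a + (t - a) * f b := by
  have ha : a ∈ Icc a b := left_mem_Icc.2 (ht.1.trans ht.2)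
  have hb : b ∈ Icc a b := right_mem_Icc.2 (ht.1.trans ht.2)
  rcases ht.1.eq_or_lt with rfl | hat
  · exact le_of_eq (by ring)
  rcases ht.2.eq_or_lt with rfl | htb
  · exact le_of_eq (by ring)
  exact hf.secant_mono_aux1 ha hb hat htb

theorem ConvexOn.upperSemicontinuousWithinAt_Icc {f : ℝ → ℝ} {a b x : ℝ}
    (hf : ConvexOn ℝ (Icc a b) f) (hx : x ∈ Icc a b) :
    UpperSemicontinuousWithinAt f (Icc a b) x := by
  rcases le_or_gt b a with hba | hab
  · intro y hy
    filter_upwards [self_mem_nhdsWithin] with z hz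
    rwa [show z = x by linarith [hz.1, hz.2, hx.1, hx.2]]
  set g : ℝ → ℝ := fun t => ((b - t) * f a + (t - a) * f b) / (b - a)
  have hg : Continuous g := by fun_prop
  have hfg : ∀ t ∈ Icc a b, f t ≤ g t := fun t ht =>
    (le_div_iff₀' (sub_pos.2 hab)).2 (hf.mul_le_chord ht)
  have hab' : b - a ≠ 0 := (sub_pos.2 hab).ne'
  rcases hx.1.eq_or_lt with rfl | hax
  · exact hg.continuousWithinAt.upperSemicontinuousWithinAt_of_le hfg
      (by simp [g, hab'])
  rcases hx.2.eq_or_lt with rfl | hxb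
  · exact hg.continuousWithinAt.upperSemicontinuousWithinAt_of_le hfg
      (by simp [g, hab'])
  have hcont : ContinuousAt f x :=
    hf.continuousOn_interior.continuousAt (interior_Icc (a := a) ▸ Ioo_mem_nhds hax hxb)
  exact hcont.continuousWithinAt.upperSemicontinuousWithinAt

theorem ConvexOn.continuousOn_Ico_of_monotoneOn {f : ℝ → ℝ} {a b : ℝ}
    (hf : ConvexOn ℝ (Icc a b) f) (hmono : MonotoneOn f (Icc a b)) :
    ContinuousOn f (Ico a b) := by
  rcases le_or_gt b a with hba | hab
  · simp [Ico_eq_empty_of_le hba]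
  have ha : a ∈ Icc a b := left_mem_Icc.2 hab.le
  have hlsc : LowerSemicontinuousWithinAt f (Icc a b) a := fun y hy => by
    filter_upwards [self_mem_nhdsWithin] with z hz
    exact hy.trans_le (hmono ha hz hz.1)
  refine (hf.subset Ico_subset_Icc_self (convex_Ico a b)).continuousOn_Ico ?_
  rw [← continuousWithinAt_Icc_iff_Ici hab]
  exact continuousWithinAt_iff_lower_upperSemicontinuousWithinAt.2
    ⟨hlsc, hf.upperSemicontinuousWithinAt_Icc ha⟩

theorem MonotoneOn.exists_convexOn_le_eq {Φ : ℝ → ℝ} {a b t : ℝ} (hΦ : MonotoneOn Φ (Icc a b))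
    (ht : t ∈ Ico a b) :
    ∃ h : ℝ → ℝ, Continuous h ∧ ConvexOn ℝ (Icc a b) h ∧ (∀ x ∈ Icc a b, h x ≤ Φ x) ∧
      h b = Φ t := by
  have hbt : 0 < b - t := sub_pos.2 ht.2
  have hta : Φ a ≤ Φ t := hΦ (left_mem_Icc.2 (ht.1.trans ht.2.le)) ⟨ht.1, ht.2.le⟩ ht.1
  set c := (Φ t - Φ a) / (b - t)
  have hc : 0 ≤ c := div_nonneg (sub_nonneg.2 hta) hbt.le
  refine ⟨fun x => Φ a + c * max (x - t) 0, by fun_prop, ?_, ?_, ?_⟩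
  · have := (((convexOn_id (convex_Icc a b)).add_const (-t)).sup
      (convexOn_const 0 (convex_Icc a b))).smul hc |>.add_const (Φ a)
    refine this.congr fun x _ => ?_
    simp only [Pi.add_apply, Pi.sup_apply, id, smul_eq_mul, sub_eq_add_neg]
    ring
  · intro x hx
    have hΦax : Φ a ≤ Φ x := hΦ (left_mem_Icc.2 (hx.1.trans hx.2)) hx hx.1
    rcases le_or_gt x t with hxt | htx
    · simpa [max_eq_right (sub_nonpos.2 hxt)] using hΦax
    have hct : c * (b - t) = Φ t - Φ a := div_mul_cancel₀ _ hbt.ne'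
    have hΦtx : Φ t ≤ Φ x := hΦ ⟨ht.1, ht.2.le⟩ hx htx.le
    simp only [max_eq_left (sub_nonneg.2 htx.le)]
    linarith [mul_le_mul_of_nonneg_left (sub_le_sub_right hx.2 t) hc]
  · simp only [max_eq_left hbt.le, c]
    field_simp
    ring

theorem convEnvOn_le {Φ : ℝ → ℝ} {m : ℝ} (hΦ : BddBelow (Φ '' Icc 0 1)) (hm : m ∈ Icc (0:ℝ) 1) :
    convEnvOn Φ m ≤ Φ m := by
  obtain ⟨c, hc⟩ := hΦ
  refine csSup_le ⟨c, fun _ => c, convexOn_const c (convex_Icc 0 1),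
    fun x hx => hc ⟨x, hx, rfl⟩, rfl⟩ ?_
  rintro y ⟨h, -, hle, rfl⟩
  exact hle m hm

theorem le_convEnvOn {Φ h : ℝ → ℝ} {m : ℝ} (hh : ConvexOn ℝ (Icc 0 1) h)
    (hle : ∀ x ∈ Icc (0:ℝ) 1, h x ≤ Φ x) (hm : m ∈ Icc (0:ℝ) 1) : h m ≤ convEnvOn Φ m := by
  refine le_csSup ⟨Φ m, ?_⟩ ⟨h, hh, hle, rfl⟩
  rintro y ⟨h', -, hle', rfl⟩
  exact hle' m hm

theorem MonotoneOn.lowerSemicontinuousWithinAt_convEnvOn_one {Φ : ℝ → ℝ}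
    (hΦ : MonotoneOn Φ (Icc 0 1)) (hΦ1 : ContinuousWithinAt Φ (Iic 1) 1) :
    LowerSemicontinuousWithinAt (convEnvOn Φ) (Icc 0 1) 1 := by
  intro y hy
  have hbdd : BddBelow (Φ '' Icc 0 1) := by
    refine ⟨Φ 0, ?_⟩
    rintro _ ⟨x, hx, rfl⟩
    exact hΦ (left_mem_Icc.2 zero_le_one) hx hx.1
  have hyΦ : y < Φ 1 := hy.trans_le (convEnvOn_le hbdd (right_mem_Icc.2 zero_le_one))
  obtain ⟨t, hyt, ht⟩ : ∃ t, y < Φ t ∧ t ∈ Ioo (0:ℝ) 1 :=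
    (((hΦ1.mono Iio_subset_Iic_self).eventually (lt_mem_nhds hyΦ)).and
      (Ioo_mem_nhdsLT zero_lt_one)).exists
  obtain ⟨h, hcont, hconv, hle, h1⟩ := hΦ.exists_convexOn_le_eq (Ioo_subset_Ico_self ht)
  filter_upwards [hcont.continuousWithinAt.eventually (lt_mem_nhds (h1 ▸ hyt)),
    self_mem_nhdsWithin] with s hs hsI using hs.trans_le (le_convEnvOn hconv hle hsI)

/-- A convex non-decreasing `f : [0,1] → ℝ` is continuous on `[0,1)` and
upper semicontinuous at every point; if moreover `f` is the convex envelope of a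
non-decreasing `Φ` that is left-continuous at `1`, then `f(1) = lim_{m→1⁻} f(m)`. -/
theorem stmt16 (f Φ : ℝ → ℝ)
    (hconv : ConvexOn ℝ (Set.Icc 0 1) f) (hmono : MonotoneOn f (Set.Icc 0 1)) :
    ContinuousOn f (Set.Ico 0 1) ∧
    (∀ x ∈ Set.Icc (0:ℝ) 1, UpperSemicontinuousWithinAt f (Set.Icc 0 1) x) ∧
    (MonotoneOn Φ (Set.Icc 0 1) → ContinuousWithinAt Φ (Set.Iic 1) 1 →
      (∀ m, f m = convEnvOn Φ m) →
      Filter.Tendsto f (nhdsWithin 1 (Set.Ico 0 1)) (nhds (f 1))) := by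
  have husc : ∀ x ∈ Icc (0:ℝ) 1, UpperSemicontinuousWithinAt f (Icc 0 1) x :=
    fun x hx => hconv.upperSemicontinuousWithinAt_Icc hx
  refine ⟨hconv.continuousOn_Ico_of_monotoneOn hmono, husc, fun hΦmono hΦcont hfenv => ?_⟩
  obtain rfl : f = convEnvOn Φ := funext hfenv
  have hcont : ContinuousWithinAt (convEnvOn Φ) (Icc 0 1) 1 :=
    continuousWithinAt_iff_lower_upperSemicontinuousWithinAt.2
      ⟨hΦmono.lowerSemicontinuousWithinAt_convEnvOn_one hΦcont,
        husc 1 (right_mem_Icc.2 zero_le_one)⟩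
  exact hcont.mono Ico_subset_Icc_self
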